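/- Let p ≥ 2, set k = (p²−p+1)/(4(p−1)), and for t ∈ ℝ define w : {(ξ,y) : ξ ≠ 0} → ℝ³ by w₁ = √(4k/3)·(coth(√k ξ) − (√3 sin t + cos t)/√3)·e^{√(k/3)[(√3 sin t + cos t)ξ + (√3 cos t − sin t)y]}, w₂ = √(4k/3)·(coth(√k ξ) − (cos t − √3 sin t)/√3)·e^{√(k/3)[(cos t − √3 sin t)ξ − (√3 cos t + sin t)y]}, w₃ = −(√(p−1)/p)·√(4k/3)·(coth(√k ξ) + (2/√3)cos t)·e^{√(4k/3)(−ξ cos t + y sin t)}. Then each component of w satisfies ∂²w/∂ξ² + ∂²w/∂y² = 2k·(coth²(√k ξ) − 1/3)·w for all ξ ≠ 0, y ∈ ℝ. -/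

import Mathlib

/-!
Each component of `w` is a constant multiple of `f(ξ, y) = (coth(qξ) + a) · exp(−qaξ + βy)` with
`q = √k` and `(qa)² + β² = 4q²/3`. Since `u = coth(qξ)` satisfies `u' = q(1 − u²)`, the exponent
`−qa` is exactly the one for which `∂²f/∂ξ² = q²(2u² − 2 + a²) f`; adding `∂²f/∂y² = β² f` and
using the constraint on `(qa, β)` gives `Δf = 2q²(u² − 1/3) f`.
-/

/-- Real hyperbolic cotangent. -/
noncomputable def coth (x : ℝ) : ℝ := Real.cosh x / Real.sinh x

/-- The associated family `r_λ`, `λ = e^{3it}`, of the complete hyperbolic affine sphere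
asymptotic to the cone `{x : 0 ≤ x₂ ≤ x₁^{1/p} x₃^{1/q}}` (Theorem 3.3 of the paper);
here `k = (p²−p+1)/(4(p−1))`. -/
noncomputable def w (p k t ξ y : ℝ) : Fin 3 → ℝ :=
  ![ Real.sqrt (4 * k / 3) *
       (coth (Real.sqrt k * ξ) - (Real.sqrt 3 * Real.sin t + Real.cos t) / Real.sqrt 3) *
       Real.exp (Real.sqrt (k / 3) *
         ((Real.sqrt 3 * Real.sin t + Real.cos t) * ξ +
          (Real.sqrt 3 * Real.cos t - Real.sin t) * y)),
     Real.sqrt (4 * k / 3) *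
       (coth (Real.sqrt k * ξ) - (Real.cos t - Real.sqrt 3 * Real.sin t) / Real.sqrt 3) *
       Real.exp (Real.sqrt (k / 3) *
         ((Real.cos t - Real.sqrt 3 * Real.sin t) * ξ -
          (Real.sqrt 3 * Real.cos t + Real.sin t) * y)),
     -(Real.sqrt (p - 1) / p) * Real.sqrt (4 * k / 3) *
       (coth (Real.sqrt k * ξ) + (2 / Real.sqrt 3) * Real.cos t) *
       Real.exp (Real.sqrt (4 * k / 3) * (-ξ * Real.cos t + y * Real.sin t)) ]

open Real Topology

theorem hasDerivAt_coth {x : ℝ} (hx : x ≠ 0) : HasDerivAt coth (1 - coth x ^ 2) x := by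
  have hsinh : sinh x ≠ 0 := sinh_ne_zero.mpr hx
  refine ((hasDerivAt_cosh x).div (hasDerivAt_sinh x) hsinh).congr_deriv ?_
  unfold coth
  field_simp

theorem hasDerivAt_coth_const_mul {q s : ℝ} (hq : q ≠ 0) (hs : s ≠ 0) :
    HasDerivAt (fun x => coth (q * x)) (q * (1 - coth (q * s) ^ 2)) s := by
  have h := (hasDerivAt_coth (mul_ne_zero hq hs)).comp s ((hasDerivAt_id s).const_mul q)
  exact h.congr_deriv (by ring)

noncomputable def cothWave (q a β ξ y : ℝ) : ℝ :=
  (coth (q * ξ) + a) * exp (-(q * a) * ξ + β * y)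

section cothWave

variable {q : ℝ} (a β : ℝ)

theorem hasDerivAt_cothWave_fst (hq : q ≠ 0) {s : ℝ} (hs : s ≠ 0) (y : ℝ) :
    HasDerivAt (fun s => cothWave q a β s y)
      (q * (1 - coth (q * s) ^ 2 - a * (coth (q * s) + a)) * exp (-(q * a) * s + β * y)) s := by
  have hexp := (((hasDerivAt_id s).const_mul (-(q * a))).add_const (β * y)).exp
  refine (((hasDerivAt_coth_const_mul hq hs).add_const a).mul hexp).congr_deriv ?_
  simp only [id_eq, mul_one]
  ring

theorem deriv_deriv_cothWave_fst (hq : q ≠ 0) {ξ : ℝ} (hξ : ξ ≠ 0) (y : ℝ) :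
    deriv (deriv fun s => cothWave q a β s y) ξ =
      q ^ 2 * (2 * coth (q * ξ) ^ 2 - 2 + a ^ 2) * cothWave q a β ξ y := by
  have hderiv : deriv (fun s => cothWave q a β s y) =ᶠ[𝓝 ξ] fun s =>
      q * (1 - coth (q * s) ^ 2 - a * (coth (q * s) + a)) * exp (-(q * a) * s + β * y) := by
    filter_upwards [eventually_ne_nhds hξ] with s hs
    exact (hasDerivAt_cothWave_fst a β hq hs y).deriv
  have hcoth := hasDerivAt_coth_const_mul hq hξ
  have hexp := (((hasDerivAt_id ξ).const_mul (-(q * a))).add_const (β * y)).exp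
  have h2 : HasDerivAt (fun s =>
      q * (1 - coth (q * s) ^ 2 - a * (coth (q * s) + a)) * exp (-(q * a) * s + β * y))
      (q ^ 2 * (2 * coth (q * ξ) ^ 2 - 2 + a ^ 2) * cothWave q a β ξ y) ξ := by
    refine (((((hasDerivAt_const ξ 1).sub (hcoth.pow 2)).sub
      ((hcoth.add_const a).const_mul a)).const_mul q).mul hexp).congr_deriv ?_
    simp only [cothWave, id_eq, mul_one, Pi.sub_apply, Pi.pow_apply]
    ring
  rw [hderiv.deriv_eq, h2.deriv]

theorem deriv_deriv_cothWave_snd (ξ y : ℝ) :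
    deriv (deriv fun s => cothWave q a β ξ s) y = β ^ 2 * cothWave q a β ξ y := by
  have hderiv (z : ℝ) : HasDerivAt (fun s => cothWave q a β ξ s) (β * cothWave q a β ξ z) z := by
    have hexp := ((((hasDerivAt_id z).const_mul β).const_add (-(q * a) * ξ)).exp).const_mul
      (coth (q * ξ) + a)
    refine hexp.congr_deriv ?_
    simp only [cothWave, id_eq, mul_one]
    ring
  rw [show deriv (fun s => cothWave q a β ξ s) = fun y => β * cothWave q a β ξ y from
    funext fun z => (hderiv z).deriv, deriv_const_mul_field']
  beta_reduce
  rw [(hderiv y).deriv]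
  ring

theorem cothWave_laplace (hq : q ≠ 0) (hβ : (q * a) ^ 2 + β ^ 2 = 4 * q ^ 2 / 3)
    {ξ : ℝ} (hξ : ξ ≠ 0) (y : ℝ) :
    deriv (deriv fun s => cothWave q a β s y) ξ + deriv (deriv fun s => cothWave q a β ξ s) y =
      2 * q ^ 2 * (coth (q * ξ) ^ 2 - 1 / 3) * cothWave q a β ξ y := by
  rw [deriv_deriv_cothWave_fst a β hq hξ, deriv_deriv_cothWave_snd]
  linear_combination cothWave q a β ξ y * hβ

end cothWave

theorem w_eq_const_mul_cothWave (p k t : ℝ) (i : Fin 3) :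
    ∃ C a β, (√k * a) ^ 2 + β ^ 2 = 4 * √k ^ 2 / 3 ∧
      ∀ ξ y, w p k t ξ y i = C * cothWave √k a β ξ y := by
  have hsqrt3 : √3 ^ 2 = 3 := sq_sqrt (by norm_num)
  have hk3 : √(k / 3) = √k / √3 := sqrt_div' k (by norm_num)
  have h4k3 : √(4 * k / 3) = 2 * √k / √3 := by
    rw [sqrt_div' _ (by norm_num), sqrt_mul (by norm_num), show (4 : ℝ) = 2 ^ 2 by norm_num,
      sqrt_sq (by norm_num)]
  have hsc := sin_sq_add_cos_sq t
  match i with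
  | 0 =>
    refine ⟨2 * √k / √3, -(√3 * sin t + cos t) / √3, √k / √3 * (√3 * cos t - sin t), ?_, ?_⟩
    · field_simp
      linear_combination
        (3 * √k ^ 2 * (sin t ^ 2 + cos t ^ 2) - 4 * √k ^ 2) * hsqrt3 + (12 * √k ^ 2) * hsc
    · intro ξ y
      simp only [w, cothWave, hk3, h4k3, Matrix.cons_val]
      ring_nf
  | 1 =>
    refine ⟨2 * √k / √3, -(cos t - √3 * sin t) / √3, -(√k / √3 * (√3 * cos t + sin t)), ?_, ?_⟩
    · field_simp
      linear_combination
        (3 * √k ^ 2 * (sin t ^ 2 + cos t ^ 2) - 4 * √k ^ 2) * hsqrt3 + (12 * √k ^ 2) * hsc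
    · intro ξ y
      simp only [w, cothWave, hk3, h4k3, Matrix.cons_val]
      ring_nf
  | 2 =>
    refine ⟨-(√(p - 1) / p) * (2 * √k / √3), 2 / √3 * cos t, 2 * √k / √3 * sin t, ?_, ?_⟩
    · field_simp
      linear_combination (12 * √k ^ 2) * hsc - (4 * √k ^ 2) * hsqrt3
    · intro ξ y
      simp only [w, cothWave, hk3, h4k3, Matrix.cons_val]
      ring_nf

/-- Every member of the associated family satisfies the affine-sphere equation
`Δ w = 2k (coth²(√k ξ) − 1/3) w` componentwise. -/
theorem associated_family_laplace (p : ℝ) (hp : 2 ≤ p)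
    (k : ℝ) (hk : k = (p ^ 2 - p + 1) / (4 * (p - 1))) (t : ℝ) :
    ∀ ξ : ℝ, ξ ≠ 0 → ∀ y : ℝ, ∀ i : Fin 3,
      deriv (deriv fun s => w p k t s y i) ξ + deriv (deriv fun s => w p k t ξ s i) y
        = 2 * k * ((coth (Real.sqrt k * ξ)) ^ 2 - 1 / 3) * w p k t ξ y i := by
  intro ξ hξ y i
  have hk_pos : 0 < k := by rw [hk]; apply div_pos <;> nlinarith
  obtain ⟨C, a, β, hβ, hw⟩ := w_eq_const_mul_cothWave p k t i
  simp only [hw, deriv_const_mul_field']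
  rw [← mul_add, cothWave_laplace a β (sqrt_ne_zero'.mpr hk_pos) hβ hξ, sq_sqrt hk_pos.le]
  ring
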